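/- For any continuous map φ: Δ^{M−1} → ℝ^N there exists a sequence of Bézier simplices b^{(i)}: Δ^{M−1} → ℝ^N such that sup_{t ∈ Δ^{M−1}} ‖φ(t) − b^{(i)}(t)‖ → 0 as i → ∞; i.e., Bézier simplices are uniformly dense in continuous maps on the simplex. -/

import Mathlib

/-!
By Stone–Weierstrass, each coordinate of `φ` is uniformly approximated on the compact simplex by a
polynomial. Since `∑ tₘ = 1` on the simplex, multiplying the homogeneous component of degree `k` by
`(∑ tₘ) ^ (D - k)` turns a polynomial of degree at most `D` into a homogeneous one of degree `D`
with the same values there. A homogeneous polynomial map of degree `D` is a Bézier simplex of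
degree `D`: its control points are its coefficients divided by the multinomial coefficients.
-/

/-- The set of multi-indices `d ∈ ℕ^M` with `∑ d m = D`. -/
def multiIdx (M D : ℕ) : Finset (Fin M → ℕ) :=
  (Fintype.piFinset fun _ => Finset.range (D + 1)).filter fun d => ∑ m, d m = D

/-- The Bézier simplex of degree `D` with control points `p`. -/
noncomputable def bezier (M N D : ℕ) (p : (Fin M → ℕ) → EuclideanSpace ℝ (Fin N))
    (t : Fin M → ℝ) : EuclideanSpace ℝ (Fin N) :=
  ∑ d ∈ multiIdx M D,
    ((Nat.multinomial Finset.univ d : ℝ) * ∏ m, t m ^ d m) • p d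

namespace MvPolynomial

section Approximation

variable {σ : Type*}

noncomputable def toContinuousMapOnAlgHom (s : Set (σ → ℝ)) : MvPolynomial σ ℝ →ₐ[ℝ] C(s, ℝ) :=
  aeval fun i => ⟨fun x => (x : σ → ℝ) i, (continuous_apply i).comp continuous_subtype_val⟩

@[simp]
theorem toContinuousMapOnAlgHom_apply (s : Set (σ → ℝ)) (q : MvPolynomial σ ℝ) (x : s) :
    toContinuousMapOnAlgHom s q x = eval (x : σ → ℝ) q := by
  induction q using MvPolynomial.induction_on <;> simp_all [toContinuousMapOnAlgHom]

theorem exists_eval_near_of_continuousOn {s : Set (σ → ℝ)} (hs : IsCompact s) {f : (σ → ℝ) → ℝ}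
    (hf : ContinuousOn f s) {ε : ℝ} (hε : 0 < ε) :
    ∃ q : MvPolynomial σ ℝ, ∀ x ∈ s, |eval x q - f x| < ε := by
  have := isCompact_iff_compactSpace.mp hs
  have hsep : (toContinuousMapOnAlgHom s).range.SeparatesPoints := by
    intro x y hxy
    obtain ⟨i, hi⟩ := Function.ne_iff.mp (Subtype.coe_ne_coe.mpr hxy)
    exact ⟨_, ⟨_, ⟨X i, rfl⟩, rfl⟩, by simpa using hi⟩
  obtain ⟨⟨_, q, rfl⟩, hq⟩ := ContinuousMap.exists_mem_subalgebra_near_continuous_of_separatesPoints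
    _ hsep (s.domRestrict f) hf.domRestrict ε hε
  exact ⟨q, fun x hx => by simpa using hq ⟨x, hx⟩⟩

end Approximation

variable {R σ : Type*} [CommSemiring R] [Fintype σ]

theorem exists_isHomogeneous_eval_eq_of_sum_eq_one (q : MvPolynomial σ R) {D : ℕ}
    (hD : q.totalDegree ≤ D) :
    ∃ q' : MvPolynomial σ R, q'.IsHomogeneous D ∧
      ∀ x : σ → R, ∑ i, x i = 1 → eval x q' = eval x q := by
  have hs : (∑ i, X i : MvPolynomial σ R).IsHomogeneous 1 :=
    IsHomogeneous.sum _ _ _ fun i _ => isHomogeneous_X R i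
  refine ⟨∑ k ∈ Finset.range (D + 1), homogeneousComponent k q * (∑ i, X i) ^ (D - k),
    IsHomogeneous.sum _ _ _ fun k hk => ?_, fun x hx => ?_⟩
  · have hkD : k + 1 * (D - k) = D := by have := Finset.mem_range.mp hk; omega
    simpa only [hkD] using (homogeneousComponent_isHomogeneous k q).mul (hs.pow (D - k))
  · have hq : ∑ k ∈ Finset.range (D + 1), homogeneousComponent k q = q := by
      rw [← Finset.sum_subset (Finset.range_subset_range.mpr (Nat.succ_le_succ hD)),
        sum_homogeneousComponent]
      intro k _ hk
      exact homogeneousComponent_eq_zero _ _ (by simpa using hk)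
    simp only [map_sum, map_mul, map_pow, eval_X, hx, one_pow, mul_one]
    rw [← map_sum, hq]

end MvPolynomial

open MvPolynomial in
theorem exists_polynomial_map_near_of_continuousOn {σ ι : Type*} [Fintype ι]
    {s : Set (σ → ℝ)} (hs : IsCompact s) {φ : (σ → ℝ) → EuclideanSpace ℝ ι}
    (hφ : ContinuousOn φ s) {ε : ℝ} (hε : 0 < ε) :
    ∃ q : ι → MvPolynomial σ ℝ, ∀ x ∈ s, ‖φ x - WithLp.toLp 2 fun j => eval x (q j)‖ < ε := by
  obtain ⟨δ, hδ, hδε⟩ := Metric.uniformContinuous_iff.mp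
    (PiLp.lipschitzWith_toLp 2 fun _ : ι => ℝ).uniformContinuous ε hε
  have hφj : ∀ j, ContinuousOn (fun x => φ x j) s := fun j => by fun_prop
  choose q hq using fun j => exists_eval_near_of_continuousOn hs (hφj j) hδ
  refine ⟨q, fun x hx => ?_⟩
  rw [← dist_eq_norm, dist_comm]
  exact hδε ((dist_pi_lt_iff hδ).mpr fun j => hq j x hx)

theorem mem_multiIdx {M D : ℕ} {d : Fin M → ℕ} : d ∈ multiIdx M D ↔ ∑ m, d m = D := by
  refine ⟨fun h => (Finset.mem_filter.mp h).2, fun h => Finset.mem_filter.mpr ⟨?_, h⟩⟩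
  refine Fintype.mem_piFinset.mpr fun m => Finset.mem_range.mpr (Nat.lt_succ_of_le ?_)
  exact h ▸ Finset.single_le_sum (fun _ _ => Nat.zero_le _) (Finset.mem_univ m)

open MvPolynomial in
theorem MvPolynomial.IsHomogeneous.eval_eq_sum_multiIdx {R : Type*} [CommSemiring R] {M D : ℕ}
    {q : MvPolynomial (Fin M) R} (hq : q.IsHomogeneous D) (x : Fin M → R) :
    eval x q = ∑ d ∈ multiIdx M D, coeff (Finsupp.equivFunOnFinite.symm d) q * ∏ m, x m ^ d m := by
  let e := (Finsupp.equivFunOnFinite : (Fin M →₀ ℕ) ≃ (Fin M → ℕ))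
  calc eval x q = ∑ d ∈ q.support.map e.toEmbedding, coeff (e.symm d) q * ∏ m, x m ^ d m := by
        simp [eval_eq', e]
    _ = _ := by
      refine Finset.sum_subset (fun d hd => mem_multiIdx.mpr ?_) (fun d _ hd => ?_)
      · rw [hq.degree_eq_sum_deg_support (Finset.mem_map_equiv.mp hd), ← Finsupp.degree_apply,
          Finsupp.degree_eq_sum]
        rfl
      · simp [notMem_support_iff.mp (mt Finset.mem_map_equiv.mpr hd)]

open MvPolynomial in
theorem exists_bezier_eq_of_isHomogeneous {M N D : ℕ} (q : Fin N → MvPolynomial (Fin M) ℝ)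
    (hq : ∀ j, (q j).IsHomogeneous D) :
    ∃ p, ∀ x, bezier M N D p x = WithLp.toLp 2 fun j => eval x (q j) := by
  refine ⟨fun d => WithLp.toLp 2 fun j =>
    coeff (Finsupp.equivFunOnFinite.symm d) (q j) / Nat.multinomial Finset.univ d, fun x => ?_⟩
  ext j
  rw [bezier, WithLp.ofLp_sum]
  simp only [(hq j).eval_eq_sum_multiIdx x, WithLp.ofLp_smul, Finset.sum_apply, Pi.smul_apply,
    smul_eq_mul]
  refine Finset.sum_congr rfl fun d _ => ?_
  have : (Nat.multinomial Finset.univ d : ℝ) ≠ 0 := mod_cast (Nat.multinomial_pos _ _).ne'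
  field_simp

open MvPolynomial in
theorem exists_bezier_eqOn_stdSimplex {M N D : ℕ} (q : Fin N → MvPolynomial (Fin M) ℝ)
    (hq : ∀ j, (q j).totalDegree ≤ D) :
    ∃ p, Set.EqOn (bezier M N D p) (fun x => WithLp.toLp 2 fun j => eval x (q j))
      (stdSimplex ℝ (Fin M)) := by
  choose q' hhom heval using fun j => (q j).exists_isHomogeneous_eval_eq_of_sum_eq_one (hq j)
  obtain ⟨p, hp⟩ := exists_bezier_eq_of_isHomogeneous q' hhom
  exact ⟨p, fun x hx => by simp only [hp, heval _ x hx.2]⟩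

theorem exists_bezier_near_of_continuousOn {M N : ℕ} {phi : (Fin M → ℝ) → EuclideanSpace ℝ (Fin N)}
    (hphi : ContinuousOn phi (stdSimplex ℝ (Fin M))) {ε : ℝ} (hε : 0 < ε) :
    ∃ D p, ∀ t ∈ stdSimplex ℝ (Fin M), ‖phi t - bezier M N D p t‖ < ε := by
  obtain ⟨q, hq⟩ := exists_polynomial_map_near_of_continuousOn (isCompact_stdSimplex _ _) hphi hε
  obtain ⟨p, hp⟩ := exists_bezier_eqOn_stdSimplex q fun j =>
    Finset.le_sup (f := fun j => (q j).totalDegree) (Finset.mem_univ j)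
  exact ⟨_, p, fun t ht => by rw [hp ht]; exact hq t ht⟩

/-- Bézier simplices are uniformly dense in continuous maps on the standard simplex. -/
theorem bezier_uniformly_dense (M N : ℕ)
    (phi : (Fin M → ℝ) → EuclideanSpace ℝ (Fin N))
    (hphi : ContinuousOn phi (stdSimplex ℝ (Fin M))) :
    ∃ (D : ℕ → ℕ) (p : (i : ℕ) → (Fin M → ℕ) → EuclideanSpace ℝ (Fin N)),
      Filter.Tendsto
        (fun i => ⨆ t : stdSimplex ℝ (Fin M), ‖phi t - bezier M N (D i) (p i) t‖)
        Filter.atTop (nhds 0) := by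
  choose D p hp using fun i : ℕ =>
    exists_bezier_near_of_continuousOn hphi (Nat.one_div_pos_of_nat (α := ℝ) (n := i))
  refine ⟨D, p, squeeze_zero (fun i => Real.iSup_nonneg fun t => norm_nonneg _)
    (fun i => Real.iSup_le (fun t => (hp i t t.2).le) (by positivity))
    tendsto_one_div_add_atTop_nhds_zero_nat⟩
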